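/- arXiv:2002.12703 — 5 statements merged into one kernel-verified Lean document; each statement's English description precedes it below -/
import Mathlib

section
/- Let W be a real symmetric m×m matrix with spectral decomposition W = Σ_i λ_i u_i u_iᵀ (u_i orthonormal), let u be a unit vector, θ ≠ 1 a positive real, and P = I + (θ-1) u uᵀ. If λ̂ is an eigenvalue of P^{1/2} W P^{1/2} that is not an eigenvalue of W, then Σ_{i=1}^m (λ_i / (λ̂ - λ_i)) ⟨u_i, u⟩² = 1/(θ-1). -/
open Matrix

lemma vmv_mulVec {m : ℕ} (w v x : Fin m → ℝ) :
    vecMulVec w v *ᵥ x = (v ⬝ᵥ x) • w := by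
  ext i
  simp [vecMulVec_apply, mulVec, dotProduct, Finset.mul_sum, Pi.smul_apply, mul_comm, mul_left_comm]

lemma sum_mulVec' {m : ℕ} (A : Fin m → Matrix (Fin m) (Fin m) ℝ) (x : Fin m → ℝ) :
    (∑ i, A i) *ᵥ x = ∑ i, A i *ᵥ x := by
  ext j
  simp only [mulVec, dotProduct, Matrix.sum_apply, Finset.sum_mul, Finset.sum_apply]
  rw [Finset.sum_comm]

lemma dp_sum {m : ℕ} (v : Fin m → ℝ) (f : Fin m → Fin m → ℝ) :
    v ⬝ᵥ (∑ i, f i) = ∑ i, v ⬝ᵥ f i := by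
  simp only [dotProduct, Finset.sum_apply, Finset.mul_sum]
  rw [Finset.sum_comm]

/-- Secular equation: any eigenvalue `λ̂` of `P^{1/2} W P^{1/2}` that is not an eigenvalue of `W`
satisfies `∑ i (λ_i/(λ̂-λ_i)) ⟨u_i,u⟩² = 1/(θ-1)`. -/
theorem stmt1 {m : ℕ} (W : Matrix (Fin m) (Fin m) ℝ) (lam : Fin m → ℝ)
    (uvec : Fin m → Fin m → ℝ)
    (horth : ∀ i j, uvec i ⬝ᵥ uvec j = if i = j then (1 : ℝ) else 0)
    (hW : W = ∑ i, lam i • vecMulVec (uvec i) (uvec i))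
    (u : Fin m → ℝ) (hu : u ⬝ᵥ u = 1)
    (θ : ℝ) (hθ : 0 < θ) (hθ1 : θ ≠ 1) (lamhat : ℝ)
    (heig : ∃ v : Fin m → ℝ, v ≠ 0 ∧
      (((1 : Matrix (Fin m) (Fin m) ℝ) + (Real.sqrt θ - 1) • vecMulVec u u) * W *
        ((1 : Matrix (Fin m) (Fin m) ℝ) + (Real.sqrt θ - 1) • vecMulVec u u)) *ᵥ v =
          lamhat • v)
    (hnot : ¬ ∃ v : Fin m → ℝ, v ≠ 0 ∧ W *ᵥ v = lamhat • v) :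
    ∑ i, lam i / (lamhat - lam i) * (uvec i ⬝ᵥ u) ^ 2 = 1 / (θ - 1) := by
  set a : ℝ := Real.sqrt θ - 1 with ha
  set S : Matrix (Fin m) (Fin m) ℝ := 1 + a • vecMulVec u u with hSdef
  have hsqrt : Real.sqrt θ * Real.sqrt θ = θ := Real.mul_self_sqrt hθ.le
  have h2 : a ^ 2 + 2 * a = θ - 1 := by nlinarith [hsqrt]
  have hS : ∀ x, S *ᵥ x = x + (a * (u ⬝ᵥ x)) • u := by
    intro x
    rw [hSdef, add_mulVec, one_mulVec, smul_mulVec, vmv_mulVec, smul_smul]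
  have Wmv : ∀ x, W *ᵥ x = ∑ i, (lam i * (uvec i ⬝ᵥ x)) • uvec i := by
    intro x
    rw [hW, sum_mulVec']
    exact Finset.sum_congr rfl fun i _ => by
      rw [smul_mulVec, vmv_mulVec, smul_smul]
  have dotW : ∀ (j : Fin m) x, uvec j ⬝ᵥ (W *ᵥ x) = lam j * (uvec j ⬝ᵥ x) := by
    intro j x
    rw [Wmv, dp_sum]
    simp [dotProduct_smul, horth, mul_ite]
  have Weig : ∀ j, W *ᵥ uvec j = lam j • uvec j := by
    intro j
    rw [Wmv]
    have : ∀ i, (lam i * (uvec i ⬝ᵥ uvec j)) • uvec i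
        = if i = j then lam j • uvec j else 0 := by
      intro i
      rcases eq_or_ne i j with h | h <;> simp [horth, h]
    simp [this]
  have huvne : ∀ i, uvec i ≠ 0 := by
    intro i h
    have := horth i i
    rw [h] at this
    simp [dotProduct] at this
  have hne : ∀ i, lamhat - lam i ≠ 0 := by
    intro i h
    have hl : lamhat = lam i := by linarith
    exact hnot ⟨uvec i, huvne i, by rw [Weig, hl]⟩
  obtain ⟨v, hv0, hveq⟩ := heig
  set w : Fin m → ℝ := S *ᵥ v with hwdef
  have hveq' : S *ᵥ (W *ᵥ w) = lamhat • v := by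
    rw [hwdef, mulVec_mulVec, mulVec_mulVec]
    exact hveq
  set c : ℝ := u ⬝ᵥ (W *ᵥ w) with hc
  have key : W *ᵥ w + ((θ - 1) * c) • u = lamhat • w := by
    have h3 : S *ᵥ (S *ᵥ (W *ᵥ w)) = lamhat • w := by
      rw [hveq', mulVec_smul, hwdef]
    rw [hS, hS] at h3
    funext j
    have h3j := congrFun h3 j
    simp only [Pi.add_apply, Pi.smul_apply, smul_eq_mul, dotProduct_add, dotProduct_smul,
      hu, ← hc, mul_one] at h3j ⊢
    linear_combination h3j + (c * u j) * h2 - 2 * (c * u j) * hsqrt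
  have hw0 : w ≠ 0 := by
    intro h
    apply hv0
    have hw' : v + (a * (u ⬝ᵥ v)) • u = 0 := by rw [← hS, ← hwdef, h]
    have hd := congrArg (fun x => u ⬝ᵥ x) hw'
    simp only [dotProduct_add, dotProduct_smul, hu, smul_eq_mul, mul_one,
      dotProduct_zero] at hd
    have h1a : (1 + a) ≠ 0 := by
      have : (0:ℝ) < Real.sqrt θ := Real.sqrt_pos.mpr hθ
      rw [ha]; intro h'; linarith
    have huv : u ⬝ᵥ v = 0 := by
      rcases mul_eq_zero.mp (show (1 + a) * (u ⬝ᵥ v) = 0 by linarith) with h' | h'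
      · exact absurd h' h1a
      · exact h'
    simpa [huv] using hw'
  have hc0 : c ≠ 0 := by
    intro h
    apply hnot
    refine ⟨w, hw0, ?_⟩
    have := key
    rw [h] at this
    simpa using this
  have coeff : ∀ i, uvec i ⬝ᵥ w = (θ - 1) * c * (uvec i ⬝ᵥ u) / (lamhat - lam i) := by
    intro i
    have hk := congrArg (fun x => uvec i ⬝ᵥ x) key
    simp only [dotProduct_add, dotProduct_smul, smul_eq_mul, dotW] at hk
    field_simp [hne i]
    linear_combination -hk
  have hcsum : c = ∑ i, (lam i * (uvec i ⬝ᵥ w)) * (uvec i ⬝ᵥ u) := by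
    rw [hc, Wmv, dp_sum]
    exact Finset.sum_congr rfl fun i _ => by
      rw [dotProduct_smul, smul_eq_mul, dotProduct_comm u (uvec i)]
  have hfin : (θ - 1) * c * ∑ i, lam i / (lamhat - lam i) * (uvec i ⬝ᵥ u) ^ 2 = c := by
    rw [Finset.mul_sum]
    conv_rhs => rw [hcsum]
    exact Finset.sum_congr rfl fun i _ => by rw [coeff i]; ring
  have hθ1' : θ - 1 ≠ 0 := sub_ne_zero.mpr hθ1
  have hSig : (θ - 1) * ∑ i, lam i / (lamhat - lam i) * (uvec i ⬝ᵥ u) ^ 2 = 1 := by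
    have h4 : c * ((θ - 1) * ∑ i, lam i / (lamhat - lam i) * (uvec i ⬝ᵥ u) ^ 2) = c * 1 := by
      rw [mul_one]; linear_combination hfin
    exact mul_left_cancel₀ hc0 h4
  rw [eq_div_iff hθ1']
  linear_combination hSig
end

section
/- Let W be a real symmetric m×m matrix, u a unit vector, θ > 0, θ ≠ 1, P = I + (θ-1) u uᵀ. Suppose ũ is a unit eigenvector of W P with eigenvalue λ̂, where λ̂ is not an eigenvalue of W and ⟨ũ, u⟩ ≠ 0. Then for every vector v, ⟨ũ, v⟩² = (Σ_i (λ_i/(λ̂-λ_i)) ⟨u_i, v⟩⟨u_i, u⟩)² / (Σ_i (λ_i²/(λ̂-λ_i)²) ⟨u_i, u⟩²), where (λ_i, u_i) is a spectral decomposition of W. -/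
/-!
Expand `W P ũ = λ̂ ũ` in the orthonormal eigenbasis: with `c = (θ - 1) ⟨u, ũ⟩` it reads
`(λ̂ - λ_j) ⟨u_j, ũ⟩ = c λ_j ⟨u_j, u⟩`, so, as `λ̂` is not an eigenvalue, the coordinates of `ũ`
are proportional to `r_j = λ_j ⟨u_j, u⟩ / (λ̂ - λ_j)`. Parseval then gives `⟨ũ, v⟩ = c Σ r_j ⟨u_j, v⟩`
and `1 = ‖ũ‖² = c² Σ r_j²`, which eliminates `c`.
-/

open Matrix

theorem sum_smul_vecMulVec_mulVec_self {n ι : Type*} [Fintype n] [Fintype ι] (lam : ι → ℝ)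
    (e : ι → n → ℝ) (y : n → ℝ) :
    (∑ i, lam i • vecMulVec (e i) (e i)) *ᵥ y = ∑ i, (lam i * (e i ⬝ᵥ y)) • e i := by
  simp only [sum_mulVec, smul_mulVec, vecMulVec_mulVec, op_smul_eq_smul, smul_smul]

section Orthonormal

variable {n ι : Type*} [Fintype n] [Fintype ι] [DecidableEq ι]
  {e : ι → n → ℝ} (horth : ∀ i j, e i ⬝ᵥ e j = if i = j then (1 : ℝ) else 0)
include horth

theorem dotProduct_sum_smul_of_orthonormal (f : ι → ℝ) (j : ι) :
    e j ⬝ᵥ ∑ i, f i • e i = f j := by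
  simp [dotProduct_sum, dotProduct_smul, horth]

theorem dotProduct_sum_smul_vecMulVec_mulVec (lam : ι → ℝ) (j : ι) (y : n → ℝ) :
    e j ⬝ᵥ (∑ i, lam i • vecMulVec (e i) (e i)) *ᵥ y = lam j * (e j ⬝ᵥ y) := by
  rw [sum_smul_vecMulVec_mulVec_self, dotProduct_sum_smul_of_orthonormal horth]

theorem sum_smul_vecMulVec_mulVec_of_orthonormal (lam : ι → ℝ) (j : ι) :
    (∑ i, lam i • vecMulVec (e i) (e i)) *ᵥ e j = lam j • e j := by
  simp [sum_smul_vecMulVec_mulVec_self, horth]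

end Orthonormal

theorem sum_dotProduct_mul_dotProduct_of_orthonormal {n : Type*} [Fintype n] [DecidableEq n]
    {e : n → n → ℝ} (horth : ∀ i j, e i ⬝ᵥ e j = if i = j then (1 : ℝ) else 0)
    (x y : n → ℝ) :
    ∑ i, (e i ⬝ᵥ x) * (e i ⬝ᵥ y) = x ⬝ᵥ y := by
  set U : Matrix n n ℝ := Matrix.of e
  have hUUt : U * Uᵀ = 1 := by
    ext i j
    simpa [Matrix.mul_apply, Matrix.one_apply, dotProduct, U] using horth i j
  have hUtU : Uᵀ * U = 1 := mul_eq_one_comm.mp hUUt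
  have h : (U *ᵥ x) ⬝ᵥ (U *ᵥ y) = x ⬝ᵥ y := by
    rw [dotProduct_mulVec, ← vecMul_transpose, vecMul_vecMul, hUtU, vecMul_one]
  simpa [dotProduct, mulVec, U] using h

theorem mul_one_add_smul_vecMulVec_mulVec {n R : Type*} [Fintype n] [DecidableEq n] [CommRing R]
    (W : Matrix n n R) (t : R) (u x : n → R) :
    (W * (1 + t • vecMulVec u u)) *ᵥ x = W *ᵥ x + (t * (u ⬝ᵥ x)) • W *ᵥ u := by
  rw [← mulVec_mulVec, add_mulVec, one_mulVec, smul_mulVec, vecMulVec_mulVec, op_smul_eq_smul,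
    smul_smul, mulVec_add, mulVec_smul]

theorem sq_dotProduct_eq_div_of_coords {n : Type*} [Fintype n] [DecidableEq n] {e : n → n → ℝ}
    (horth : ∀ i j, e i ⬝ᵥ e j = if i = j then (1 : ℝ) else 0) {x : n → ℝ} (hx : x ⬝ᵥ x = 1)
    {c : ℝ} {r : n → ℝ} (hcoord : ∀ j, e j ⬝ᵥ x = c * r j) (v : n → ℝ) :
    (x ⬝ᵥ v) ^ 2 = (∑ i, r i * (e i ⬝ᵥ v)) ^ 2 / ∑ i, r i ^ 2 := by
  have hxv : x ⬝ᵥ v = c * ∑ i, r i * (e i ⬝ᵥ v) := by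
    simp only [← sum_dotProduct_mul_dotProduct_of_orthonormal horth x v, hcoord, Finset.mul_sum,
      mul_assoc]
  have hxx : 1 = c ^ 2 * ∑ i, r i ^ 2 := by
    simp only [← hx, ← sum_dotProduct_mul_dotProduct_of_orthonormal horth x x, hcoord,
      Finset.mul_sum]
    exact Finset.sum_congr rfl fun i _ => by ring
  have hD : ∑ i, r i ^ 2 ≠ 0 := fun h => by simp [h] at hxx
  rw [hxv, eq_div_iff hD]
  linear_combination (-(∑ i, r i * (e i ⬝ᵥ v)) ^ 2) * hxx

theorem stmt2_general {m : ℕ} (W : Matrix (Fin m) (Fin m) ℝ) (lam : Fin m → ℝ)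
    (uvec : Fin m → Fin m → ℝ)
    (horth : ∀ i j, uvec i ⬝ᵥ uvec j = if i = j then (1 : ℝ) else 0)
    (hW : W = ∑ i, lam i • vecMulVec (uvec i) (uvec i))
    (u : Fin m → ℝ)
    (θ : ℝ)
    (util : Fin m → ℝ) (hunit : util ⬝ᵥ util = 1) (lamhat : ℝ)
    (heig : (W * ((1 : Matrix (Fin m) (Fin m) ℝ) + (θ - 1) • vecMulVec u u)) *ᵥ util =
      lamhat • util)
    (hnot : ¬ ∃ v : Fin m → ℝ, v ≠ 0 ∧ W *ᵥ v = lamhat • v) :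
    ∀ v : Fin m → ℝ,
      (util ⬝ᵥ v) ^ 2 =
        (∑ i, lam i / (lamhat - lam i) * (uvec i ⬝ᵥ v) * (uvec i ⬝ᵥ u)) ^ 2 /
          (∑ i, lam i ^ 2 / (lamhat - lam i) ^ 2 * (uvec i ⬝ᵥ u) ^ 2) := by
  intro v
  have hne : ∀ j, lamhat - lam j ≠ 0 := fun j h =>
    hnot ⟨uvec j, fun h0 => by simpa [h0] using horth j j,
      by rw [hW, sum_smul_vecMulVec_mulVec_of_orthonormal horth, sub_eq_zero.mp h]⟩
  have hcoord : ∀ j, uvec j ⬝ᵥ util =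
      ((θ - 1) * (u ⬝ᵥ util)) * (lam j / (lamhat - lam j) * (uvec j ⬝ᵥ u)) := by
    intro j
    have h := congrArg (uvec j ⬝ᵥ ·) heig
    simp only [mul_one_add_smul_vecMulVec_mulVec, dotProduct_add, dotProduct_smul, hW,
      dotProduct_sum_smul_vecMulVec_mulVec horth, smul_eq_mul] at h
    field_simp [hne j]
    linear_combination -h
  rw [sq_dotProduct_eq_div_of_coords horth hunit hcoord v]
  congr 2
  · exact Finset.sum_congr rfl fun i _ => by ring
  · simp only [mul_pow, div_pow]

/-- Eigenvector coordinate formula for a unit eigenvector `ũ` of `W P`. -/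
theorem stmt2 {m : ℕ} (W : Matrix (Fin m) (Fin m) ℝ) (lam : Fin m → ℝ)
    (uvec : Fin m → Fin m → ℝ)
    (horth : ∀ i j, uvec i ⬝ᵥ uvec j = if i = j then (1 : ℝ) else 0)
    (hW : W = ∑ i, lam i • vecMulVec (uvec i) (uvec i))
    (u : Fin m → ℝ) (hu : u ⬝ᵥ u = 1)
    (θ : ℝ) (hθ : 0 < θ) (hθ1 : θ ≠ 1)
    (util : Fin m → ℝ) (hunit : util ⬝ᵥ util = 1) (lamhat : ℝ)
    (heig : (W * ((1 : Matrix (Fin m) (Fin m) ℝ) + (θ - 1) • vecMulVec u u)) *ᵥ util =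
      lamhat • util)
    (hnot : ¬ ∃ v : Fin m → ℝ, v ≠ 0 ∧ W *ᵥ v = lamhat • v)
    (hover : util ⬝ᵥ u ≠ 0) :
    ∀ v : Fin m → ℝ,
      (util ⬝ᵥ v) ^ 2 =
        (∑ i, lam i / (lamhat - lam i) * (uvec i ⬝ᵥ v) * (uvec i ⬝ᵥ u)) ^ 2 /
          (∑ i, lam i ^ 2 / (lamhat - lam i) ^ 2 * (uvec i ⬝ᵥ u) ^ 2) :=
  stmt2_general W lam uvec horth hW u θ util hunit lamhat heig hnot
end

section
/- Let W be a real symmetric m×m matrix with spectral decomposition (λ_i, u_i), u a unit vector, θ > 0, θ ≠ 1, P = I + (θ-1) u uᵀ. If ũ is a unit eigenvector of W P with eigenvalue λ̂ not in the spectrum of W and ⟨ũ, u⟩ ≠ 0, then ⟨ũ, u⟩² = 1 / ((θ-1)² Σ_i (λ_i²/(λ̂-λ_i)²) ⟨u_i, u⟩²). -/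
/-!
Write `c = ⟨ũ, u⟩`. Since `P ũ = ũ + (θ - 1) c u`, the eigen-equation reads
`W (ũ + (θ - 1) c u) = λ̂ ũ`; pairing with `uⱼ` gives
`(λ̂ - λⱼ) ⟨uⱼ, ũ⟩ = (θ - 1) c λⱼ ⟨uⱼ, u⟩`, where `λ̂ ≠ λⱼ` because `uⱼ` is an eigenvector of `W`.
Squaring and summing over `j`, Parseval's identity turns the left-hand side into `‖ũ‖² = 1`.
-/

open Matrix

variable {n R : Type*} [Fintype n] [DecidableEq n]

def spectralSum [CommRing R] (lam : n → R) (v : n → n → R) : Matrix n n R :=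
  ∑ i, lam i • vecMulVec (v i) (v i)

section CommRing

variable [CommRing R]

theorem one_add_smul_vecMulVec_mulVec (t : R) (u x : n → R) :
    (1 + t • vecMulVec u u) *ᵥ x = x + (t * (u ⬝ᵥ x)) • u := by
  rw [add_mulVec, one_mulVec, smul_mulVec, vecMulVec_mulVec, op_smul_eq_smul, smul_smul]

variable {v : n → n → R}

theorem spectralSum_mulVec_self (hv : ∀ i j, v i ⬝ᵥ v j = if i = j then 1 else 0)
    (lam : n → R) (j : n) :
    spectralSum lam v *ᵥ v j = lam j • v j := by
  simp [spectralSum, sum_mulVec, smul_mulVec, vecMulVec_mulVec, hv]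

theorem dotProduct_spectralSum_mulVec (hv : ∀ i j, v i ⬝ᵥ v j = if i = j then 1 else 0)
    (lam : n → R) (j : n) (x : n → R) :
    v j ⬝ᵥ (spectralSum lam v *ᵥ x) = lam j * (v j ⬝ᵥ x) := by
  simp only [spectralSum, sum_mulVec, dotProduct_sum, smul_mulVec, vecMulVec_mulVec,
    op_smul_eq_smul, dotProduct_smul, hv, smul_eq_mul, mul_ite, mul_one, mul_zero,
    Finset.sum_ite_eq, Finset.mem_univ, if_true]

theorem sum_dotProduct_sq_of_orthonormal (hv : ∀ i j, v i ⬝ᵥ v j = if i = j then 1 else 0)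
    (x : n → R) :
    ∑ j, (v j ⬝ᵥ x) ^ 2 = x ⬝ᵥ x := by
  have hUUt : of v * (of v)ᵀ = 1 := by
    ext i j
    simpa [mul_apply, one_apply, dotProduct] using hv i j
  calc ∑ j, (v j ⬝ᵥ x) ^ 2 = (of v *ᵥ x) ⬝ᵥ (of v *ᵥ x) := by
        simp only [sq, dotProduct]; rfl
    _ = x ⬝ᵥ x := by
        rw [dotProduct_mulVec, ← vecMul_transpose, vecMul_vecMul, mul_eq_one_comm.mp hUUt,
          vecMul_one]

theorem sub_mul_dotProduct_of_spectralSum_mul_mulVec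
    (hv : ∀ i j, v i ⬝ᵥ v j = if i = j then 1 else 0)
    {lam : n → R} {t μ : R} {u x : n → R}
    (heig : (spectralSum lam v * (1 + t • vecMulVec u u)) *ᵥ x = μ • x) (j : n) :
    (μ - lam j) * (v j ⬝ᵥ x) = t * (x ⬝ᵥ u) * lam j * (v j ⬝ᵥ u) := by
  have h := congrArg (v j ⬝ᵥ ·) heig
  simp only [← mulVec_mulVec, one_add_smul_vecMulVec_mulVec, dotProduct_spectralSum_mulVec hv,
    dotProduct_add, dotProduct_smul, smul_eq_mul, dotProduct_comm u x] at h
  linear_combination -h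

end CommRing

section Field

variable [Field R] {v : n → n → R}

theorem ne_of_not_exists_spectralSum_mulVec_eq
    (hv : ∀ i j, v i ⬝ᵥ v j = if i = j then 1 else 0)
    {lam : n → R} {μ : R}
    (hμ : ¬ ∃ y : n → R, y ≠ 0 ∧ spectralSum lam v *ᵥ y = μ • y) (j : n) : μ ≠ lam j := by
  rintro rfl
  refine hμ ⟨v j, fun h0 => ?_, spectralSum_mulVec_self hv lam j⟩
  simpa [h0] using hv j j

theorem secular_sum_mul_dotProduct_sq (hv : ∀ i j, v i ⬝ᵥ v j = if i = j then 1 else 0)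
    {lam : n → R} {t μ : R} {u x : n → R}
    (heig : (spectralSum lam v * (1 + t • vecMulVec u u)) *ᵥ x = μ • x)
    (hμ : ¬ ∃ y : n → R, y ≠ 0 ∧ spectralSum lam v *ᵥ y = μ • y) :
    t ^ 2 * (∑ i, lam i ^ 2 / (μ - lam i) ^ 2 * (v i ⬝ᵥ u) ^ 2) * (x ⬝ᵥ u) ^ 2 = x ⬝ᵥ x := by
  rw [← sum_dotProduct_sq_of_orthonormal hv, Finset.mul_sum, Finset.sum_mul]
  refine Finset.sum_congr rfl fun j _ => ?_
  have hne : μ - lam j ≠ 0 := sub_ne_zero.2 (ne_of_not_exists_spectralSum_mulVec_eq hv hμ j)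
  have hcoord := sub_mul_dotProduct_of_spectralSum_mul_mulVec hv heig j
  field_simp
  linear_combination (-(μ - lam j) * (v j ⬝ᵥ x) - t * (x ⬝ᵥ u) * lam j * (v j ⬝ᵥ u)) * hcoord

end Field

theorem stmt3_general {m : ℕ} (W : Matrix (Fin m) (Fin m) ℝ) (lam : Fin m → ℝ)
    (uvec : Fin m → Fin m → ℝ)
    (horth : ∀ i j, uvec i ⬝ᵥ uvec j = if i = j then (1 : ℝ) else 0)
    (hW : W = ∑ i, lam i • vecMulVec (uvec i) (uvec i))
    (u : Fin m → ℝ)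
    (θ : ℝ)
    (util : Fin m → ℝ) (hunit : util ⬝ᵥ util = 1) (lamhat : ℝ)
    (heig : (W * ((1 : Matrix (Fin m) (Fin m) ℝ) + (θ - 1) • vecMulVec u u)) *ᵥ util =
      lamhat • util)
    (hnot : ¬ ∃ v : Fin m → ℝ, v ≠ 0 ∧ W *ᵥ v = lamhat • v) :
    (util ⬝ᵥ u) ^ 2 =
      1 / ((θ - 1) ^ 2 * ∑ i, lam i ^ 2 / (lamhat - lam i) ^ 2 * (uvec i ⬝ᵥ u) ^ 2) := by
  change W = spectralSum lam uvec at hW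
  subst hW
  refine eq_one_div_of_mul_eq_one_left ?_
  have h := secular_sum_mul_dotProduct_sq horth heig hnot
  rw [hunit] at h
  linear_combination h

/-- Overlap formula: `⟨ũ,u⟩² = 1/((θ-1)² ∑ᵢ (λᵢ²/(λ̂-λᵢ)²) ⟨uᵢ,u⟩²)`. -/
theorem stmt3 {m : ℕ} (W : Matrix (Fin m) (Fin m) ℝ) (lam : Fin m → ℝ)
    (uvec : Fin m → Fin m → ℝ)
    (horth : ∀ i j, uvec i ⬝ᵥ uvec j = if i = j then (1 : ℝ) else 0)
    (hW : W = ∑ i, lam i • vecMulVec (uvec i) (uvec i))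
    (u : Fin m → ℝ) (hu : u ⬝ᵥ u = 1)
    (θ : ℝ) (hθ : 0 < θ) (hθ1 : θ ≠ 1)
    (util : Fin m → ℝ) (hunit : util ⬝ᵥ util = 1) (lamhat : ℝ)
    (heig : (W * ((1 : Matrix (Fin m) (Fin m) ℝ) + (θ - 1) • vecMulVec u u)) *ᵥ util =
      lamhat • util)
    (hnot : ¬ ∃ v : Fin m → ℝ, v ≠ 0 ∧ W *ᵥ v = lamhat • v)
    (hover : util ⬝ᵥ u ≠ 0) :
    (util ⬝ᵥ u) ^ 2 =
      1 / ((θ - 1) ^ 2 * ∑ i, lam i ^ 2 / (lamhat - lam i) ^ 2 * (uvec i ⬝ᵥ u) ^ 2) :=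
  stmt3_general W lam uvec horth hW u θ util hunit lamhat heig hnot
end

section
/- Let u, v be unit vectors in R^m, θ_X > 0, θ_Y real, A = I + (θ_X - 1) u uᵀ, and M = A^{-1/2} ((θ_Y - 1) v vᵀ) A^{-1/2} + (1/θ_X - 1) u uᵀ. Then trace(M) = (θ_Y - 1)(1 - (1 - 1/θ_X) ⟨u, v⟩²) + (1/θ_X - 1), and M has rank at most 2. -/
open Matrix

private lemma vmv_mul {m : ℕ} (a b c d : Fin m → ℝ) :
    vecMulVec a b * vecMulVec c d = (b ⬝ᵥ c) • vecMulVec a d := by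
  ext i j
  simp only [Matrix.mul_apply, vecMulVec_apply, Matrix.smul_apply, smul_eq_mul,
    dotProduct, Finset.sum_mul]
  exact Finset.sum_congr rfl fun k _ => by ring

private lemma trace_vmv {m : ℕ} (a b : Fin m → ℝ) :
    (vecMulVec a b).trace = a ⬝ᵥ b := by
  simp [Matrix.trace, Matrix.diag, vecMulVec_apply, dotProduct]

private lemma smul_vmv {m : ℕ} (c : ℝ) (a b : Fin m → ℝ) :
    c • vecMulVec a b = vecMulVec (c • a) b := by
  ext i j
  simp [vecMulVec_apply, mul_assoc]

private lemma rank_vmv_le {m : ℕ} (a b : Fin m → ℝ) :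
    (vecMulVec a b).rank ≤ 1 := by
  rw [Matrix.vecMulVec_eq (Fin 1)]
  refine (Matrix.rank_mul_le_right _ _).trans ?_
  simpa using Matrix.rank_le_card_height (Matrix.replicateRow (Fin 1) b)

private lemma rank_add_le' {m : ℕ} (A B : Matrix (Fin m) (Fin m) ℝ) :
    (A + B).rank ≤ A.rank + B.rank := by
  have h : LinearMap.range (A + B).mulVecLin ≤
      LinearMap.range A.mulVecLin ⊔ LinearMap.range B.mulVecLin := by
    rw [Matrix.mulVecLin_add]
    rintro x ⟨y, rfl⟩
    exact Submodule.add_mem_sup ⟨y, rfl⟩ ⟨y, rfl⟩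
  calc (A + B).rank ≤ Module.finrank ℝ
        ↥(LinearMap.range A.mulVecLin ⊔ LinearMap.range B.mulVecLin) :=
      Submodule.finrank_mono h
    _ ≤ A.rank + B.rank := Submodule.finrank_add_le_finrank_add_finrank _ _


private lemma add_vmv {m : ℕ} (a b c : Fin m → ℝ) :
    vecMulVec (a + b) c = vecMulVec a c + vecMulVec b c := by
  ext i j; simp [vecMulVec_apply, add_mul]

private lemma vmv_add {m : ℕ} (a b c : Fin m → ℝ) :
    vecMulVec a (b + c) = vecMulVec a b + vecMulVec a c := by
  ext i j; simp [vecMulVec_apply, mul_add]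

/-- Trace and rank of the residual-spike matrix
`M = A^{-1/2} ((θ_Y - 1) v vᵀ) A^{-1/2} + (1/θ_X - 1) u uᵀ` with `A = I + (θ_X - 1) u uᵀ`. -/
theorem stmt17 {m : ℕ} (u v : Fin m → ℝ) (hu : u ⬝ᵥ u = 1) (hv : v ⬝ᵥ v = 1)
    (θX θY : ℝ) (hθX : 0 < θX) :
    (((1 : Matrix (Fin m) (Fin m) ℝ) + ((Real.sqrt θX)⁻¹ - 1) • vecMulVec u u) *
          ((θY - 1) • vecMulVec v v) *
          ((1 : Matrix (Fin m) (Fin m) ℝ) + ((Real.sqrt θX)⁻¹ - 1) • vecMulVec u u) +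
        (1 / θX - 1) • vecMulVec u u).trace =
      (θY - 1) * (1 - (1 - 1 / θX) * (u ⬝ᵥ v) ^ 2) + (1 / θX - 1) ∧
    (((1 : Matrix (Fin m) (Fin m) ℝ) + ((Real.sqrt θX)⁻¹ - 1) • vecMulVec u u) *
          ((θY - 1) • vecMulVec v v) *
          ((1 : Matrix (Fin m) (Fin m) ℝ) + ((Real.sqrt θX)⁻¹ - 1) • vecMulVec u u) +
        (1 / θX - 1) • vecMulVec u u).rank ≤ 2 := by
    classical
  set s : ℝ := (Real.sqrt θX)⁻¹ - 1 with hs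
  set t : ℝ := u ⬝ᵥ v with ht
  set U : Matrix (Fin m) (Fin m) ℝ := vecMulVec u u with hU
  set V : Matrix (Fin m) (Fin m) ℝ := vecMulVec v v with hV
  set w : Fin m → ℝ := v + (s * t) • u with hw
  have hvu : v ⬝ᵥ u = t := by rw [ht, dotProduct_comm]
  have h1 : ((1 : Matrix (Fin m) (Fin m) ℝ) + s • U) * V = vecMulVec w v := by
    rw [add_mul, one_mul, Matrix.smul_mul, hU, hV, vmv_mul, ← ht, smul_smul,
      smul_vmv, hw, add_vmv]
  have h2 : vecMulVec w v * ((1 : Matrix (Fin m) (Fin m) ℝ) + s • U) = vecMulVec w w := by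
    rw [mul_add, mul_one, Matrix.mul_smul, hU, vmv_mul, hvu, smul_smul, hw]
    ext i j
    simp only [hw, vecMulVec_apply, Matrix.add_apply, Matrix.smul_apply,
      Pi.add_apply, Pi.smul_apply, smul_eq_mul]
    ring
  have hM : ((1 : Matrix (Fin m) (Fin m) ℝ) + s • U) *
          ((θY - 1) • V) *
          ((1 : Matrix (Fin m) (Fin m) ℝ) + s • U) +
        (1 / θX - 1) • U =
      (θY - 1) • vecMulVec w w + (1 / θX - 1) • U := by
    rw [Matrix.mul_smul, Matrix.smul_mul, h1, h2]
  have hww : w ⬝ᵥ w = 1 + (2 * s + s ^ 2) * t ^ 2 := by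
    rw [hw]
    simp only [dotProduct_add, add_dotProduct, dotProduct_smul, smul_dotProduct,
      smul_eq_mul, hu, hv, hvu, ← ht]
    ring
  have hsq : (Real.sqrt θX)⁻¹ ^ 2 = θX⁻¹ := by
    rw [inv_pow, Real.sq_sqrt hθX.le]
  constructor
  · rw [hM, Matrix.trace_add, Matrix.trace_smul, Matrix.trace_smul, hU, trace_vmv,
      trace_vmv, hww, hu]
    have : s + 1 = (Real.sqrt θX)⁻¹ := by rw [hs]; ring
    have h3 : (s + 1) ^ 2 = 1 / θX := by rw [this, hsq, one_div]
    rw [smul_eq_mul, smul_eq_mul]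
    linear_combination (θY - 1) * t ^ 2 * h3
  · rw [hM]
    refine (rank_add_le' _ _).trans ?_
    have r1 : ((θY - 1) • vecMulVec w w).rank ≤ 1 := by
      rw [smul_vmv]; exact rank_vmv_le _ _
    have r2 : ((1 / θX - 1) • U).rank ≤ 1 := by
      rw [hU, smul_vmv]; exact rank_vmv_le _ _
    omega
end

section
/- Let W be a real symmetric m×m matrix with spectral decomposition (λ_i, u_i)_{i=1}^m, θ > 1, u a unit vector, P = I + (θ-1) u uᵀ, and let λ̂ > max_i λ_i be an eigenvalue of P^{1/2} W P^{1/2} with unit eigenvector û. Then ⟨û, u⟩² = (1/((θ-1)² D)) · θ / (1 + (θ-1)/((θ-1)² D)), where D = Σ_i (λ_i²/(λ̂-λ_i)²) ⟨u_i, u⟩². -/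
open Matrix

set_option maxHeartbeats 1600000 in
/-- Normalized overlap of the top eigenvector of `P^{1/2} W P^{1/2}` with the spike direction:
`⟨û,u⟩² = (1/((θ-1)² D)) · θ / (1 + (θ-1)/((θ-1)² D))` with
`D = ∑ i (λᵢ²/(λ̂-λᵢ)²) ⟨uᵢ,u⟩²`. -/
theorem stmt18 {m : ℕ} (W : Matrix (Fin m) (Fin m) ℝ) (lam : Fin m → ℝ)
    (uvec : Fin m → Fin m → ℝ)
    (horth : ∀ i j, uvec i ⬝ᵥ uvec j = if i = j then (1 : ℝ) else 0)
    (hW : W = ∑ i, lam i • vecMulVec (uvec i) (uvec i))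
    (θ : ℝ) (hθ : 1 < θ)
    (u : Fin m → ℝ) (hu : u ⬝ᵥ u = 1)
    (lamhat : ℝ) (hgt : ∀ i, lam i < lamhat)
    (uhat : Fin m → ℝ) (hunit : uhat ⬝ᵥ uhat = 1)
    (heig : (((1 : Matrix (Fin m) (Fin m) ℝ) + (Real.sqrt θ - 1) • vecMulVec u u) * W *
        ((1 : Matrix (Fin m) (Fin m) ℝ) + (Real.sqrt θ - 1) • vecMulVec u u)) *ᵥ uhat =
      lamhat • uhat) :
    (uhat ⬝ᵥ u) ^ 2 =
      (1 / ((θ - 1) ^ 2 * ∑ i, lam i ^ 2 / (lamhat - lam i) ^ 2 * (uvec i ⬝ᵥ u) ^ 2)) * θ /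
        (1 + (θ - 1) /
          ((θ - 1) ^ 2 * ∑ i, lam i ^ 2 / (lamhat - lam i) ^ 2 * (uvec i ⬝ᵥ u) ^ 2)) := by
  classical
  have hθ0 : (0:ℝ) < θ := by linarith
  have hs1 : 1 < Real.sqrt θ := by
    have : Real.sqrt 1 < Real.sqrt θ := Real.sqrt_lt_sqrt (by norm_num) hθ
    simpa using this
  set s : ℝ := Real.sqrt θ - 1 with hs_def
  have hs0 : 0 < s := by simp only [hs_def]; linarith
  have hsθ : s ^ 2 + 2 * s + 1 = θ := by
    have h := Real.sq_sqrt hθ0.le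
    simp only [hs_def]; nlinarith [h]
  have hdpos : ∀ j, 0 < lamhat - lam j := fun j => sub_pos.2 (hgt j)
  have hdne : ∀ j, lamhat - lam j ≠ 0 := fun j => (hdpos j).ne'
  -- Parseval
  have h1 : (Matrix.of uvec) * (Matrix.of uvec)ᵀ = 1 := by
    ext i j
    simpa [Matrix.mul_apply, Matrix.one_apply, dotProduct] using horth i j
  have h2 : (Matrix.of uvec)ᵀ * (Matrix.of uvec) = 1 := mul_eq_one_comm.mp h1
  have hUU : ∀ j k, (∑ i, uvec i j * uvec i k) = if j = k then (1:ℝ) else 0 := by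
    intro j k
    have := congrFun (congrFun h2 j) k
    simpa [Matrix.mul_apply, Matrix.one_apply, Matrix.transpose_apply] using this
  have parseval : ∀ w w' : Fin m → ℝ,
      (∑ i, (uvec i ⬝ᵥ w) * (uvec i ⬝ᵥ w')) = w ⬝ᵥ w' := by
    intro w w'
    calc (∑ i, (uvec i ⬝ᵥ w) * (uvec i ⬝ᵥ w'))
        = ∑ i, ∑ j, ∑ k, (uvec i j * w j) * (uvec i k * w' k) := by
          refine Finset.sum_congr rfl fun i _ => ?_
          rw [dotProduct, dotProduct, Finset.sum_mul_sum]
      _ = ∑ j, ∑ k, ∑ i, (uvec i j * w j) * (uvec i k * w' k) := by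
          rw [Finset.sum_comm]
          exact Finset.sum_congr rfl fun j _ => Finset.sum_comm
      _ = ∑ j, ∑ k, (∑ i, uvec i j * uvec i k) * (w j * w' k) := by
          refine Finset.sum_congr rfl fun j _ => Finset.sum_congr rfl fun k _ => ?_
          rw [Finset.sum_mul]
          exact Finset.sum_congr rfl fun i _ => by ring
      _ = w ⬝ᵥ w' := by
          simp only [hUU, ite_mul, one_mul, zero_mul]
          rw [dotProduct]
          exact Finset.sum_congr rfl fun j _ => by simp
  -- mulVec computations
  have hP : ∀ w : Fin m → ℝ, ((1 : Matrix (Fin m) (Fin m) ℝ) + s • vecMulVec u u) *ᵥ w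
      = w + (s * (u ⬝ᵥ w)) • u := by
    intro w
    rw [add_mulVec, one_mulVec, smul_mulVec]
    congr 1
    funext i
    simp only [Pi.smul_apply, smul_eq_mul, mulVec, dotProduct, vecMulVec_apply, Finset.mul_sum]
    rw [Finset.sum_mul]
    exact Finset.sum_congr rfl fun j _ => by ring
  have hWv : ∀ (w : Fin m → ℝ) p, (W *ᵥ w) p = ∑ i, lam i * (uvec i ⬝ᵥ w) * uvec i p := by
    intro w p
    rw [hW]
    simp only [mulVec, dotProduct, Matrix.sum_apply, Matrix.smul_apply, smul_eq_mul,
      vecMulVec_apply, Finset.sum_mul, Finset.mul_sum]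
    rw [Finset.sum_comm]
    exact Finset.sum_congr rfl fun i _ => Finset.sum_congr rfl fun q _ => by ring
  have hdot_smul : ∀ (c : ℝ) (v x : Fin m → ℝ), (∑ p, x p * (c * v p)) = c * (v ⬝ᵥ x) := by
    intro c v x
    rw [dotProduct, Finset.mul_sum]
    exact Finset.sum_congr rfl fun p _ => by ring
  have hWdot : ∀ (w : Fin m → ℝ) j, uvec j ⬝ᵥ (W *ᵥ w) = lam j * (uvec j ⬝ᵥ w) := by
    intro w j
    rw [dotProduct]
    simp only [hWv]
    calc (∑ p, uvec j p * ∑ i, lam i * (uvec i ⬝ᵥ w) * uvec i p)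
        = ∑ p, ∑ i, uvec j p * (lam i * (uvec i ⬝ᵥ w) * uvec i p) := by
          exact Finset.sum_congr rfl fun p _ => Finset.mul_sum _ _ _
      _ = ∑ i, ∑ p, uvec j p * (lam i * (uvec i ⬝ᵥ w) * uvec i p) := Finset.sum_comm
      _ = ∑ i, lam i * (uvec i ⬝ᵥ w) * (uvec i ⬝ᵥ uvec j) := by
          exact Finset.sum_congr rfl fun i _ => hdot_smul _ _ _
      _ = lam j * (uvec j ⬝ᵥ w) := by
          simp only [horth, mul_ite, mul_one, mul_zero]
          simp
  have hudot : ∀ w : Fin m → ℝ,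
      u ⬝ᵥ (W *ᵥ w) = ∑ i, lam i * (uvec i ⬝ᵥ w) * (uvec i ⬝ᵥ u) := by
    intro w
    rw [dotProduct]
    simp only [hWv]
    calc (∑ p, u p * ∑ i, lam i * (uvec i ⬝ᵥ w) * uvec i p)
        = ∑ p, ∑ i, u p * (lam i * (uvec i ⬝ᵥ w) * uvec i p) := by
          exact Finset.sum_congr rfl fun p _ => Finset.mul_sum _ _ _
      _ = ∑ i, ∑ p, u p * (lam i * (uvec i ⬝ᵥ w) * uvec i p) := Finset.sum_comm
      _ = ∑ i, lam i * (uvec i ⬝ᵥ w) * (uvec i ⬝ᵥ u) := by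
          exact Finset.sum_congr rfl fun i _ => hdot_smul _ _ _
  -- the eigen equation, componentwise
  set α : ℝ := u ⬝ᵥ uhat with hα_def
  set v1 : Fin m → ℝ := uhat + (s * α) • u with hv1_def
  set γ : ℝ := u ⬝ᵥ (W *ᵥ v1) with hγ_def
  have heig2 : (W *ᵥ v1) + (s * γ) • u = lamhat • uhat := by
    have h3 : (((1 : Matrix (Fin m) (Fin m) ℝ) + s • vecMulVec u u) * W *
        ((1 : Matrix (Fin m) (Fin m) ℝ) + s • vecMulVec u u)) *ᵥ uhat
        = ((1 : Matrix (Fin m) (Fin m) ℝ) + s • vecMulVec u u) *ᵥ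
          (W *ᵥ (((1 : Matrix (Fin m) (Fin m) ℝ) + s • vecMulVec u u) *ᵥ uhat)) := by
      rw [mulVec_mulVec, mulVec_mulVec]
    rw [h3, hP uhat, hP] at heig
    rw [← hv1_def] at heig
    rw [← hγ_def] at heig
    exact heig
  have hv1dot : ∀ j, uvec j ⬝ᵥ v1 = (uvec j ⬝ᵥ uhat) + s * α * (uvec j ⬝ᵥ u) := by
    intro j
    simp only [hv1_def, dotProduct_add, dotProduct_smul, smul_eq_mul]
  have hmain : ∀ j, lam j * ((uvec j ⬝ᵥ uhat) + s * α * (uvec j ⬝ᵥ u))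
      + s * γ * (uvec j ⬝ᵥ u) = lamhat * (uvec j ⬝ᵥ uhat) := by
    intro j
    have h4 := congrArg (fun w => uvec j ⬝ᵥ w) heig2
    simp only [dotProduct_add, dotProduct_smul, smul_eq_mul] at h4
    rw [hWdot, hv1dot j] at h4
    exact h4
  have hxj : ∀ j, uvec j ⬝ᵥ uhat
      = (uvec j ⬝ᵥ u) * (s * (α * lam j + γ)) / (lamhat - lam j) := by
    intro j
    have h5 := hmain j
    rw [eq_div_iff (hdne j)]
    linear_combination (-1 : ℝ) * h5
  -- γ expansion
  have hγexp : γ = ∑ i, lam i * ((uvec i ⬝ᵥ uhat) + s * α * (uvec i ⬝ᵥ u)) * (uvec i ⬝ᵥ u) := by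
    rw [hγ_def, hudot v1]
    exact Finset.sum_congr rfl fun i _ => by rw [hv1dot i]
  -- splitting helpers
  have hsplit2 : ∀ (c d : ℝ) (f g : Fin m → ℝ),
      (∑ j, (c * f j + d * g j)) = c * (∑ j, f j) + d * (∑ j, g j) := by
    intro c d f g
    rw [Finset.sum_add_distrib, Finset.mul_sum, Finset.mul_sum]
  have hsplit3 : ∀ (c d e : ℝ) (f g h : Fin m → ℝ),
      (∑ j, (c * f j + d * g j + e * h j))
        = c * (∑ j, f j) + d * (∑ j, g j) + e * (∑ j, h j) := by
    intro c d e f g h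
    rw [Finset.sum_add_distrib, Finset.sum_add_distrib, Finset.mul_sum, Finset.mul_sum,
      Finset.mul_sum]
  have hsplitsub : ∀ (c : ℝ) (f g : Fin m → ℝ),
      (∑ j, (c * f j - g j)) = c * (∑ j, f j) - (∑ j, g j) := by
    intro c f g
    rw [Finset.sum_sub_distrib, Finset.mul_sum]
  -- scalar sums
  set S0 : ℝ := ∑ j, (uvec j ⬝ᵥ u) ^ 2 / (lamhat - lam j) with hS0_def
  set S1 : ℝ := ∑ j, (uvec j ⬝ᵥ u) ^ 2 * lam j / (lamhat - lam j) with hS1_def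
  set Q2 : ℝ := ∑ i, lam i ^ 2 / (lamhat - lam i) ^ 2 * (uvec i ⬝ᵥ u) ^ 2 with hQ2_def
  set Q1 : ℝ := ∑ j, lam j / (lamhat - lam j) ^ 2 * (uvec j ⬝ᵥ u) ^ 2 with hQ1_def
  set Q0 : ℝ := ∑ j, (uvec j ⬝ᵥ u) ^ 2 / (lamhat - lam j) ^ 2 with hQ0_def
  have hF1 : (∑ j, (uvec j ⬝ᵥ u) ^ 2) = 1 := by
    have hp1 := parseval u u; rw [hu] at hp1
    rw [← hp1]; exact Finset.sum_congr rfl fun j _ => pow_two _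
  have hF3 : (∑ j, (uvec j ⬝ᵥ u) * (uvec j ⬝ᵥ uhat)) = α := parseval u uhat
  have hF2 : (∑ j, (uvec j ⬝ᵥ uhat) ^ 2) = 1 := by
    have hp2 := parseval uhat uhat; rw [hunit] at hp2
    rw [← hp2]; exact Finset.sum_congr rfl fun j _ => pow_two _
  -- E1
  have hE1 : α = s * α * S1 + s * γ * S0 := by
    calc α = ∑ j, (uvec j ⬝ᵥ u) * (uvec j ⬝ᵥ uhat) := hF3.symm
      _ = ∑ j, ((s * α) * ((uvec j ⬝ᵥ u) ^ 2 * lam j / (lamhat - lam j))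
            + (s * γ) * ((uvec j ⬝ᵥ u) ^ 2 / (lamhat - lam j))) := by
          refine Finset.sum_congr rfl fun j _ => ?_
          rw [hxj j]
          field_simp [hdne j]
      _ = s * α * S1 + s * γ * S0 := by
          rw [hsplit2, ← hS1_def, ← hS0_def]
  -- E2
  have hE2 : γ = s * α * lamhat * S1 + s * γ * S1 := by
    calc γ = ∑ i, lam i * ((uvec i ⬝ᵥ uhat) + s * α * (uvec i ⬝ᵥ u)) * (uvec i ⬝ᵥ u) := hγexp
      _ = ∑ j, ((s * α * lamhat) * ((uvec j ⬝ᵥ u) ^ 2 * lam j / (lamhat - lam j))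
            + (s * γ) * ((uvec j ⬝ᵥ u) ^ 2 * lam j / (lamhat - lam j))) := by
          refine Finset.sum_congr rfl fun j _ => ?_
          rw [hxj j]
          field_simp [hdne j]
          ring
      _ = s * α * lamhat * S1 + s * γ * S1 := by
          rw [hsplit2, ← hS1_def]
  -- E3
  have hE3 : (1:ℝ) = s ^ 2 * α ^ 2 * Q2 + 2 * s ^ 2 * α * γ * Q1 + s ^ 2 * γ ^ 2 * Q0 := by
    calc (1:ℝ) = ∑ j, (uvec j ⬝ᵥ uhat) ^ 2 := hF2.symm
      _ = ∑ j, ((s ^ 2 * α ^ 2) * (lam j ^ 2 / (lamhat - lam j) ^ 2 * (uvec j ⬝ᵥ u) ^ 2)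
            + (2 * s ^ 2 * α * γ) * (lam j / (lamhat - lam j) ^ 2 * (uvec j ⬝ᵥ u) ^ 2)
            + (s ^ 2 * γ ^ 2) * ((uvec j ⬝ᵥ u) ^ 2 / (lamhat - lam j) ^ 2)) := by
          refine Finset.sum_congr rfl fun j _ => ?_
          rw [hxj j]
          field_simp [hdne j]
          ring
      _ = s ^ 2 * α ^ 2 * Q2 + 2 * s ^ 2 * α * γ * Q1 + s ^ 2 * γ ^ 2 * Q0 := by
          rw [hsplit3, ← hQ2_def, ← hQ1_def, ← hQ0_def]
  -- ratio relations
  have hR1 : S1 = lamhat * S0 - 1 := by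
    calc S1 = ∑ j, (uvec j ⬝ᵥ u) ^ 2 * lam j / (lamhat - lam j) := hS1_def
      _ = ∑ j, (lamhat * ((uvec j ⬝ᵥ u) ^ 2 / (lamhat - lam j)) - (uvec j ⬝ᵥ u) ^ 2) := by
          refine Finset.sum_congr rfl fun j _ => ?_
          field_simp [hdne j]
          ring
      _ = lamhat * S0 - 1 := by
          rw [hsplitsub, ← hS0_def, hF1]
  have hR2 : lamhat * Q1 = Q2 + S1 := by
    have : (∑ j, (lamhat * (lam j / (lamhat - lam j) ^ 2 * (uvec j ⬝ᵥ u) ^ 2)))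
        = ∑ j, ((1:ℝ) * (lam j ^ 2 / (lamhat - lam j) ^ 2 * (uvec j ⬝ᵥ u) ^ 2)
            + (1:ℝ) * ((uvec j ⬝ᵥ u) ^ 2 * lam j / (lamhat - lam j))) := by
      refine Finset.sum_congr rfl fun j _ => ?_
      field_simp [hdne j]
      ring
    rw [hsplit2, one_mul, one_mul, ← hQ2_def, ← hS1_def] at this
    calc lamhat * Q1 = ∑ j, lamhat * (lam j / (lamhat - lam j) ^ 2 * (uvec j ⬝ᵥ u) ^ 2) := by
          rw [hQ1_def, Finset.mul_sum]
      _ = Q2 + S1 := this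
  have hR3 : lamhat * Q0 = Q1 + S0 := by
    have : (∑ j, (lamhat * ((uvec j ⬝ᵥ u) ^ 2 / (lamhat - lam j) ^ 2)))
        = ∑ j, ((1:ℝ) * (lam j / (lamhat - lam j) ^ 2 * (uvec j ⬝ᵥ u) ^ 2)
            + (1:ℝ) * ((uvec j ⬝ᵥ u) ^ 2 / (lamhat - lam j))) := by
      refine Finset.sum_congr rfl fun j _ => ?_
      field_simp [hdne j]
      ring
    rw [hsplit2, one_mul, one_mul, ← hQ1_def, ← hS0_def] at this
    calc lamhat * Q0 = ∑ j, lamhat * ((uvec j ⬝ᵥ u) ^ 2 / (lamhat - lam j) ^ 2) := by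
          rw [hQ0_def, Finset.mul_sum]
      _ = Q1 + S0 := this
  -- determinant dichotomy
  by_cases hB : (1 - s * S1) ^ 2 - s ^ 2 * lamhat * S0 * S1 = 0
  · -- main case
    have hLS0 : lamhat * S0 = S1 + 1 := by linarith
    have hB' : (1 - s * S1) ^ 2 - s ^ 2 * (S1 + 1) * S1 = 0 := by
      linear_combination hB + s ^ 2 * S1 * hLS0
    have hS1v : S1 * (θ - 1) = 1 := by
      linear_combination (-1 : ℝ) * hB' - S1 * hsθ
    have hp : lamhat * S0 * (θ - 1) = θ := by
      linear_combination (θ - 1) * hLS0 + hS1v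
    have hLne : lamhat ≠ 0 := by
      intro h0
      rw [h0] at hp; simp at hp; linarith
    have hγα : γ * (s + 1) = lamhat * α := by
      have h2' : γ * (θ - 1) = s * α * lamhat + s * γ := by
        linear_combination (θ - 1) * hE2 + (s * α * lamhat + s * γ) * hS1v
      have h3' : s * (γ * (s + 1)) = s * (lamhat * α) := by
        linear_combination h2' + γ * hsθ
      exact mul_left_cancel₀ hs0.ne' h3'
    by_cases hγ0 : γ = 0
    · exfalso
      have hα0 : α = 0 := by
        have h6 := hγα; rw [hγ0] at h6; simp at h6
        rcases h6 with h | h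
        · exact absurd h hLne
        · exact h
      rw [hγ0, hα0] at hE3
      simp at hE3
    · -- γ ≠ 0
      have hA1 : lamhat * α * γ = γ ^ 2 * (s + 1) := by
        linear_combination (-γ) * hγα
      have hA2 : lamhat ^ 2 * α ^ 2 = γ ^ 2 * (s + 1) ^ 2 := by
        linear_combination (-(γ * (s + 1) + lamhat * α)) * hγα
      have hQ0' : lamhat ^ 2 * Q0 = Q2 + S1 + lamhat * S0 := by
        linear_combination lamhat * hR3 + hR2
      have hB1 : lamhat ^ 2 = s ^ 2 * (lamhat * α) ^ 2 * Q2
          + 2 * s ^ 2 * (lamhat * α) * γ * (lamhat * Q1)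
          + s ^ 2 * γ ^ 2 * (lamhat ^ 2 * Q0) := by
        linear_combination lamhat ^ 2 * hE3
      have hC : lamhat ^ 2 = s ^ 2 * γ ^ 2 * ((s + 1) ^ 2 * Q2
          + 2 * (s + 1) * (Q2 + S1) + (Q2 + S1 + lamhat * S0)) := by
        linear_combination hB1 + s ^ 2 * Q2 * hA2 + 2 * s ^ 2 * (lamhat * Q1) * hA1
          + 2 * s ^ 2 * γ ^ 2 * (s + 1) * hR2 + s ^ 2 * γ ^ 2 * hQ0'
      have hD : lamhat ^ 2 * (θ - 1)
          = s ^ 2 * γ ^ 2 * ((s + 2) ^ 2 * ((θ - 1) * Q2 + 1)) := by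
        linear_combination (θ - 1) * hC + s ^ 2 * γ ^ 2 * (2 * s + 3) * hS1v
          + s ^ 2 * γ ^ 2 * hp - s ^ 2 * γ ^ 2 * hsθ
      have hE : γ ^ 2 * (θ - 1) * θ
          = γ ^ 2 * (θ - 1) * (α ^ 2 * ((θ - 1) ^ 2 * Q2 + (θ - 1))) := by
        linear_combination α ^ 2 * hD - (θ - 1) * hA2 - γ ^ 2 * (θ - 1) * hsθ
          + γ ^ 2 * α ^ 2 * ((θ - 1) * Q2 + 1) * (s ^ 2 + 2 * s + θ - 1) * hsθ
      have hγθne : γ ^ 2 * (θ - 1) ≠ 0 := by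
        apply mul_ne_zero (pow_ne_zero 2 hγ0); linarith
      have hkey : α ^ 2 * ((θ - 1) ^ 2 * Q2 + (θ - 1)) = θ :=
        (mul_left_cancel₀ hγθne hE).symm
      -- Q2 ≠ 0
      have hQ2ne : Q2 ≠ 0 := by
        intro h0
        have hsum0 : (∑ i, lam i ^ 2 / (lamhat - lam i) ^ 2 * (uvec i ⬝ᵥ u) ^ 2) = 0 :=
          hQ2_def.symm.trans h0
        have hnn : ∀ j ∈ Finset.univ,
            (0:ℝ) ≤ lam j ^ 2 / (lamhat - lam j) ^ 2 * (uvec j ⬝ᵥ u) ^ 2 := by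
          intro j _
          positivity
        have hterm := (Finset.sum_eq_zero_iff_of_nonneg hnn).1 hsum0
        have hS1z : S1 = 0 := by
          rw [hS1_def]
          refine Finset.sum_eq_zero fun j _ => ?_
          have ht := hterm j (Finset.mem_univ j)
          have hd := hdne j
          have hz : lam j * (uvec j ⬝ᵥ u) = 0 := by
            by_contra hc
            have hne2 : lam j ^ 2 / (lamhat - lam j) ^ 2 * (uvec j ⬝ᵥ u) ^ 2 ≠ 0 := by
              have h6 : lam j ≠ 0 := fun h => hc (by rw [h]; ring)
              have h7 : (uvec j ⬝ᵥ u) ≠ 0 := fun h => hc (by rw [h]; ring)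
              positivity
            exact hne2 ht
          rcases mul_eq_zero.1 hz with h | h
          · rw [h]; ring
          · rw [h]; ring
        rw [hS1z] at hS1v; simp at hS1v
      -- finish
      have hαu : uhat ⬝ᵥ u = α := by rw [hα_def, dotProduct_comm]
      rw [hαu]
      have hEne : (θ - 1) ^ 2 * Q2 ≠ 0 := by
        apply mul_ne_zero _ hQ2ne
        apply pow_ne_zero; linarith
      have hsumne : (θ - 1) ^ 2 * Q2 + (θ - 1) ≠ 0 := by
        intro h0
        rw [h0, mul_zero] at hkey
        linarith
      rw [one_add_div hEne, eq_div_iff (div_ne_zero hsumne hEne)]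
      linear_combination hkey / ((θ - 1) ^ 2 * Q2)
  · -- B ≠ 0 : α = γ = 0, contradiction with norm
    exfalso
    have hBα : α * ((1 - s * S1) ^ 2 - s ^ 2 * lamhat * S0 * S1) = 0 := by
      linear_combination (1 - s * S1) * hE1 + s * S0 * hE2
    have hBγ : γ * ((1 - s * S1) ^ 2 - s ^ 2 * lamhat * S0 * S1) = 0 := by
      linear_combination s * lamhat * S1 * hE1 + (1 - s * S1) * hE2
    have hα0 : α = 0 := by
      rcases mul_eq_zero.1 hBα with h | h
      · exact h
      · exact absurd h hB
    have hγ0 : γ = 0 := by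
      rcases mul_eq_zero.1 hBγ with h | h
      · exact h
      · exact absurd h hB
    rw [hα0, hγ0] at hE3
    simp at hE3
end
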